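/- arXiv:1208.0641 — 4 statements merged into one kernel-verified Lean document; each statement's English description precedes it below -/
import Mathlib

section
/- Let ω > 0 be a real number and v ∈ ℝ². For each positive integer N let d_p = (cos(2πp/N), sin(2πp/N)) for p = 1, …, N. Then the uniform Riemann sums (1/N) Σ_{p=1}^{N} exp(i ω d_p · v) converge, as N → ∞, to J₀(ω‖v‖), where d_p · v denotes the Euclidean inner product and ‖v‖ the Euclidean norm. -/
/-!
Right-endpoint Riemann sums of a `K`-Lipschitz function on `[a, b]` are within
`K (b - a)² / N` of its integral, and the plane wave `θ ↦ exp (i (x cos θ + y sin θ))` is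
Lipschitz. Its integral over a period is computed by writing `x cos θ + y sin θ = r sin (θ + ψ)`
with `r = √(x² + y²)`: by periodicity the phase `ψ` can be dropped, and over `[-π, π]` the
symmetry `θ ↦ -θ` pairs `exp (i r sin θ)` with `exp (-i r sin θ)`, leaving
`2 ∫₀^π cos (r sin θ) dθ = 2π J₀(r)`. Since `J₀` is even, `r = |ω| ‖v‖` may be replaced by
`ω ‖v‖`.
-/

/-- The Bessel function of the first kind of integer order `n`, defined via
the integral representation `J_n(x) = (1/π) ∫_0^π cos(n θ - x sin θ) dθ`. -/
noncomputable def besselJ (n : ℕ) (x : ℝ) : ℝ :=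
  (1 / Real.pi) * ∫ θ in (0:ℝ)..Real.pi, Real.cos (n * θ - x * Real.sin θ)

open Real Filter Topology Finset intervalIntegral
open scoped NNReal Complex

section RiemannSum

variable {E : Type*} [NormedAddCommGroup E] [NormedSpace ℝ E] [CompleteSpace E]
  {g : ℝ → E} {K : ℝ≥0}

theorem LipschitzWith.norm_sub_integral_le (hg : LipschitzWith K g) (s t : ℝ) :
    ‖(t - s) • g t - ∫ x in s..t, g x‖ ≤ K * (t - s) ^ 2 := by
  have hbound : ∀ x ∈ Set.uIoc s t, ‖g t - g x‖ ≤ K * |t - s| := fun x hx => by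
    rw [← dist_eq_norm]
    refine (hg.dist_le_mul t x).trans (mul_le_mul_of_nonneg_left ?_ K.2)
    exact (Real.dist_eq t x).trans_le (Set.abs_sub_right_of_mem_uIcc (Set.uIoc_subset_uIcc hx))
  calc ‖(t - s) • g t - ∫ x in s..t, g x‖ = ‖∫ x in s..t, (g t - g x)‖ := by
        rw [integral_sub intervalIntegrable_const (hg.continuous.intervalIntegrable s t),
          integral_const]
    _ ≤ K * |t - s| * |t - s| := norm_integral_le_of_norm_le_const hbound
    _ = K * (t - s) ^ 2 := by rw [mul_assoc, abs_mul_abs_self, sq]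

theorem LipschitzWith.tendsto_riemannSum (hg : LipschitzWith K g) (a b : ℝ) :
    Tendsto (fun N : ℕ => ((b - a) / N) • ∑ i ∈ range N, g (a + (i + 1) * ((b - a) / N)))
      atTop (𝓝 (∫ x in a..b, g x)) := by
  rw [tendsto_iff_norm_sub_tendsto_zero]
  refine squeeze_zero' (.of_forall fun _ => norm_nonneg _) ?_
    (tendsto_const_div_atTop_nhds_zero_nat (K * (b - a) ^ 2))
  filter_upwards [eventually_ne_atTop 0] with N hN
  set h := (b - a) / N
  set t : ℕ → ℝ := fun i => a + i * h
  have ht : ∀ i, t (i + 1) - t i = h := fun i => by simp only [t]; push_cast; ring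
  have hsplit : ∫ x in a..b, g x = ∑ i ∈ range N, ∫ x in t i..t (i + 1), g x := by
    rw [sum_integral_adjacent_intervals fun i _ => hg.continuous.intervalIntegrable _ _]
    have htN : t N = b := by simp only [t, h]; field_simp; ring
    rw [htN, show t 0 = a by simp [t]]
  calc ‖h • ∑ i ∈ range N, g (a + (i + 1) * h) - ∫ x in a..b, g x‖
      = ‖∑ i ∈ range N, ((t (i + 1) - t i) • g (t (i + 1)) - ∫ x in t i..t (i + 1), g x)‖ := by
        simp only [ht]
        rw [hsplit, smul_sum, ← sum_sub_distrib]
        simp only [t, Nat.cast_add_one]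
    _ ≤ ∑ i ∈ range N, K * (t (i + 1) - t i) ^ 2 :=
        norm_sum_le_of_le _ fun i _ => hg.norm_sub_integral_le _ _
    _ = K * (b - a) ^ 2 / N := by
        simp only [ht, sum_const, card_range, nsmul_eq_mul, h]
        field_simp

end RiemannSum

theorem lipschitzWith_cexp_I_mul_ofReal :
    LipschitzWith 1 fun u : ℝ => cexp (Complex.I * u) :=
  .of_dist_le_mul fun u v => by
    have hfactor : cexp (Complex.I * u) - cexp (Complex.I * v)
        = cexp (Complex.I * v) * (cexp (Complex.I * ↑(u - v)) - 1) := by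
      rw [mul_sub, ← Complex.exp_add]; push_cast; ring_nf
    rw [dist_eq_norm, hfactor, norm_mul, Complex.norm_exp_I_mul_ofReal, one_mul, NNReal.coe_one,
      one_mul, Real.dist_eq, ← Real.norm_eq_abs]
    exact Real.norm_exp_I_mul_ofReal_sub_one_le

theorem lipschitzWith_cexp_planeWave (x y : ℝ) :
    LipschitzWith (‖x‖₊ + ‖y‖₊) fun θ => cexp (Complex.I * ↑(x * cos θ + y * sin θ)) := by
  simpa only [one_mul, mul_one, Function.comp_def, smul_eq_mul] using
    lipschitzWith_cexp_I_mul_ofReal.comp (((lipschitzWith_smul x).comp lipschitzWith_cos).add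
      ((lipschitzWith_smul y).comp lipschitzWith_sin))

theorem besselJ_zero_eq (a : ℝ) : besselJ 0 a = π⁻¹ * ∫ θ in 0..π, cos (a * sin θ) := by
  simp [besselJ, cos_neg]

theorem besselJ_zero_abs (a : ℝ) : besselJ 0 |a| = besselJ 0 a := by
  obtain h | h := abs_choice a <;> simp [h, besselJ_zero_eq]

theorem periodic_cexp_I_mul_sin (a : ℝ) :
    Function.Periodic (fun θ => cexp (Complex.I * ↑(a * sin θ))) (2 * π) :=
  fun θ => by simp only [sin_add_two_pi]

theorem integral_cexp_I_mul_sin (a : ℝ) :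
    ∫ θ in 0..2 * π, cexp (Complex.I * ↑(a * sin θ)) = ↑(2 * π * besselJ 0 a) := by
  set f : ℝ → ℂ := fun θ => cexp (Complex.I * ↑(a * sin θ))
  have hf : Continuous f := by fun_prop
  have hper : Function.Periodic f (2 * π) := periodic_cexp_I_mul_sin a
  have hsym : ∀ θ, f (-θ) + f θ = ↑(2 * cos (a * sin θ)) := fun θ => by
    simp only [f, sin_neg, mul_neg, Complex.ofReal_neg]
    push_cast
    rw [Complex.two_cos]
    ring_nf
  calc ∫ θ in 0..2 * π, f θ = ∫ θ in -π..π, f θ := by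
        rw [← zero_add (2 * π), hper.intervalIntegral_add_eq 0 (-π)]
        ring_nf
    _ = ∫ θ in 0..π, (f (-θ) + f θ) := by
        rw [← integral_add_adjacent_intervals (b := 0) (hf.intervalIntegrable _ _)
          (hf.intervalIntegrable _ _), integral_add ((hf.comp' continuous_neg).intervalIntegrable _ _)
          (hf.intervalIntegrable _ _), integral_comp_neg, neg_zero]
    _ = ↑(2 * π * besselJ 0 a) := by
        simp only [hsym, intervalIntegral.integral_ofReal, integral_const_mul, besselJ_zero_eq]
        push_cast
        field_simp

theorem exists_mul_cos_add_mul_sin_eq (x y : ℝ) :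
    ∃ ψ, ∀ θ, x * cos θ + y * sin θ = √(x ^ 2 + y ^ 2) * sin (θ + ψ) := by
  set c : ℂ := y + x * Complex.I
  have hc : ‖c‖ = √(x ^ 2 + y ^ 2) := by rw [Complex.norm_add_mul_I, add_comm]
  refine ⟨c.arg, fun θ => ?_⟩
  have hcos := Complex.norm_mul_cos_arg c
  have hsin := Complex.norm_mul_sin_arg c
  simp only [hc, c, Complex.add_re, Complex.ofReal_re, Complex.mul_re, Complex.I_re, Complex.I_im,
    Complex.ofReal_im, Complex.add_im, Complex.mul_im] at hcos hsin
  rw [sin_add]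
  linear_combination (-cos θ) * hsin - sin θ * hcos

theorem integral_cexp_planeWave (x y : ℝ) :
    ∫ θ in 0..2 * π, cexp (Complex.I * ↑(x * cos θ + y * sin θ))
      = ↑(2 * π * besselJ 0 √(x ^ 2 + y ^ 2)) := by
  obtain ⟨ψ, hψ⟩ := exists_mul_cos_add_mul_sin_eq x y
  set F : ℝ → ℂ := fun θ => cexp (Complex.I * ↑(√(x ^ 2 + y ^ 2) * sin θ))
  have hper : Function.Periodic F (2 * π) := periodic_cexp_I_mul_sin _
  calc ∫ θ in 0..2 * π, cexp (Complex.I * ↑(x * cos θ + y * sin θ))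
      = ∫ θ in 0..2 * π, F (θ + ψ) := by simp only [hψ, F]
    _ = ∫ θ in ψ..ψ + 2 * π, F θ := by rw [integral_comp_add_right F ψ, zero_add, add_comm]
    _ = ∫ θ in 0..0 + 2 * π, F θ := hper.intervalIntegral_add_eq ψ 0
    _ = ↑(2 * π * besselJ 0 √(x ^ 2 + y ^ 2)) := by
        rw [zero_add]
        exact integral_cexp_I_mul_sin _

theorem sqrt_sq_add_sq_eq_abs_mul_norm (ω : ℝ) (v : EuclideanSpace ℝ (Fin 2)) :
    √((ω * v 0) ^ 2 + (ω * v 1) ^ 2) = |ω * ‖v‖| := by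
  rw [← sqrt_sq_eq_abs, mul_pow ω ‖v‖, EuclideanSpace.norm_sq_eq, Fin.sum_univ_two,
    Real.norm_eq_abs, Real.norm_eq_abs, sq_abs, sq_abs]
  ring_nf

theorem riemannSum_planeWave_tendsto_besselJ0_general
    (ω : ℝ) (v : EuclideanSpace ℝ (Fin 2)) :
    Filter.Tendsto
      (fun N : ℕ =>
        (1 / N : ℂ) * ∑ p ∈ Finset.Icc 1 N,
          Complex.exp (Complex.I * ω *
            (Real.cos (2 * Real.pi * p / N) * v 0 +
              Real.sin (2 * Real.pi * p / N) * v 1)))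
      Filter.atTop (nhds ((besselJ 0 (ω * ‖v‖) : ℝ) : ℂ)) := by
  have hlim := ((lipschitzWith_cexp_planeWave (ω * v 0) (ω * v 1)).tendsto_riemannSum 0
    (2 * π)).const_smul (2 * π)⁻¹
  rw [integral_cexp_planeWave, sqrt_sq_add_sq_eq_abs_mul_norm, besselJ_zero_abs] at hlim
  convert hlim using 2 with N
  · rw [← Ico_add_one_right_eq_Icc, sum_Ico_eq_sum_range, add_tsub_cancel_right, smul_sum,
      smul_sum, mul_sum]
    refine sum_congr rfl fun i _ => ?_
    rw [Complex.real_smul, Complex.real_smul]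
    push_cast
    field_simp
    ring_nf
  · rw [Complex.real_smul]
    push_cast
    field_simp

/-- Riemann sums of the plane wave over `N` equally spaced directions on the
unit circle converge to `J₀(ω ‖v‖)` as `N → ∞`. -/
theorem riemannSum_planeWave_tendsto_besselJ0
    (ω : ℝ) (hω : 0 < ω) (v : EuclideanSpace ℝ (Fin 2)) :
    Filter.Tendsto
      (fun N : ℕ =>
        (1 / N : ℂ) * ∑ p ∈ Finset.Icc 1 N,
          Complex.exp (Complex.I * ω *
            (Real.cos (2 * Real.pi * p / N) * v 0 +
              Real.sin (2 * Real.pi * p / N) * v 1)))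
      Filter.atTop (nhds ((besselJ 0 (ω * ‖v‖) : ℝ) : ℂ)) :=
  riemannSum_planeWave_tendsto_besselJ0_general ω v
end

section
/- Let ω > 0, let M be a positive integer, let r₁, …, r_M ∈ ℝ² be points, and let r ∈ ℝ². For each positive integer N set d_p = (cos(2πp/N), sin(2πp/N)) for p = 1, …, N. Then the quantity | Σ_{m=1}^{M} ( (1/N) Σ_{p=1}^{N} exp(i ω d_p · (r_m − r)) )² | (complex modulus) converges, as N → ∞, to Σ_{m=1}^{M} J₀(ω‖r_m − r‖)². (This is the structure identified in Theorem 3.3: for a sufficiently large number N of incident/observation directions, the single-frequency subspace migration imaging function is proportional to Σ_m J₀²(ω|r_m − r|).) -/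
open Filter Finset Real intervalIntegral Topology
open scoped Interval

section RiemannSum

variable {E : Type*} [NormedAddCommGroup E] [NormedSpace ℝ E] [CompleteSpace E]

lemma norm_smul_sub_integral_le {f : ℝ → E} {a b c ε : ℝ}
    (hf : IntervalIntegrable f MeasureTheory.volume a b) (hε : ∀ x ∈ Ι a b, ‖f c - f x‖ ≤ ε) :
    ‖(b - a) • f c - ∫ x in a..b, f x‖ ≤ ε * |b - a| := by
  rw [← integral_const, ← integral_sub intervalIntegrable_const hf]
  exact norm_integral_le_of_norm_le_const hε

lemma norm_riemannSum_sub_integral_le {f : ℝ → E} {a b ε : ℝ} {N : ℕ} (hab : a ≤ b) (hN : 0 < N)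
    (hf : ContinuousOn f (Set.Icc a b))
    (hε : ∀ x ∈ Set.Icc a b, ∀ y ∈ Set.Icc a b, |x - y| ≤ (b - a) / N → ‖f x - f y‖ ≤ ε) :
    ‖((b - a) / N) • ∑ p ∈ Icc 1 N, f (a + p * ((b - a) / N)) - ∫ x in a..b, f x‖
      ≤ ε * (b - a) := by
  set h := (b - a) / N
  set x : ℕ → ℝ := fun i => a + i * h
  have hh : 0 ≤ h := div_nonneg (sub_nonneg.2 hab) N.cast_nonneg
  have hNh : N * h = b - a := mul_div_cancel₀ _ (Nat.cast_ne_zero.2 hN.ne')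
  have hx_mem : ∀ i ≤ N, x i ∈ Set.Icc a b := fun i hi => by
    have : (i : ℝ) * h ≤ N * h := mul_le_mul_of_nonneg_right (by exact_mod_cast hi) hh
    exact ⟨le_add_of_nonneg_right (by positivity), by simp only [x]; linarith⟩
  have hstep : ∀ i, x (i + 1) - x i = h := fun i => by simp only [x]; push_cast; ring
  have hle : ∀ i, x i ≤ x (i + 1) := fun i => by linarith [hstep i]
  have hcell : ∀ i < N, Set.Icc (x i) (x (i + 1)) ⊆ Set.Icc a b := fun i hi =>
    Set.Icc_subset_Icc (hx_mem i hi.le).1 (hx_mem (i + 1) hi).2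
  have hcell_integrable : ∀ i < N, IntervalIntegrable f MeasureTheory.volume (x i) (x (i + 1)) :=
    fun i hi => (hf.mono (Set.uIcc_of_le (hle i) ▸ hcell i hi)).intervalIntegrable
  have hsum : ∑ p ∈ Icc 1 N, f (x p) = ∑ i ∈ range N, f (x (i + 1)) := by
    rw [← Finset.Ico_add_one_right_eq_Icc, sum_Ico_eq_sum_range]
    simp only [Nat.add_sub_cancel, add_comm 1]
  have hint : ∫ t in a..b, f t = ∑ i ∈ range N, ∫ t in x i..x (i + 1), f t := by
    rw [sum_integral_adjacent_intervals hcell_integrable]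
    simp only [x, Nat.cast_zero, zero_mul, add_zero, hNh, add_sub_cancel]
  have hterm : ∀ i ∈ range N,
      ‖h • f (x (i + 1)) - ∫ t in x i..x (i + 1), f t‖ ≤ ε * h := by
    intro i hi
    have hsub := hcell i (mem_range.1 hi)
    have key := norm_smul_sub_integral_le (c := x (i + 1)) (ε := ε)
      (hcell_integrable i (mem_range.1 hi)) fun t ht => by
        rw [Set.uIoc_of_le (hle i)] at ht
        refine hε _ (hsub ⟨hle i, le_rfl⟩) _ (hsub (Set.Ioc_subset_Icc_self ht)) ?_
        rw [abs_of_nonneg (by linarith [ht.2])]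
        linarith [hstep i, ht.1]
    rwa [hstep, abs_of_nonneg hh] at key
  calc ‖h • ∑ p ∈ Icc 1 N, f (a + p * h) - ∫ t in a..b, f t‖
      = ‖∑ i ∈ range N, (h • f (x (i + 1)) - ∫ t in x i..x (i + 1), f t)‖ := by
        rw [hsum, hint, smul_sum, sum_sub_distrib]
    _ ≤ ∑ i ∈ range N, ε * h := (norm_sum_le _ _).trans (sum_le_sum hterm)
    _ = ε * (b - a) := by rw [sum_const, card_range, nsmul_eq_mul, ← hNh]; ring

theorem tendsto_riemannSum_integral {f : ℝ → E} {a b : ℝ} (hab : a ≤ b)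
    (hf : ContinuousOn f (Set.Icc a b)) :
    Tendsto (fun N : ℕ => ((b - a) / N) • ∑ p ∈ Icc 1 N, f (a + p * ((b - a) / N)))
      atTop (𝓝 (∫ x in a..b, f x)) := by
  rw [Metric.tendsto_nhds]
  intro ε hε
  have hε' : 0 < ε / (b - a + 1) := div_pos hε (by linarith)
  obtain ⟨δ, hδ, hfδ⟩ := Metric.uniformContinuousOn_iff_le.1
    (isCompact_Icc.uniformContinuousOn_of_continuous hf) _ hε'
  filter_upwards [eventually_gt_atTop 0,
    (tendsto_const_div_atTop_nhds_zero_nat (b - a)).eventually (ge_mem_nhds hδ)] with N hN hNδ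
  rw [dist_eq_norm]
  calc _ ≤ ε / (b - a + 1) * (b - a) := norm_riemannSum_sub_integral_le hab hN hf
          fun x hx y hy hxy => by simpa only [dist_eq_norm] using hfδ x hx y hy (hxy.trans hNδ)
    _ < ε := by
      rw [div_mul_eq_mul_div, div_lt_iff₀ (by linarith)]
      nlinarith

end RiemannSum

open Complex in
lemma integral_exp_sin_mul_I (R : ℝ) :
    ∫ θ in (0:ℝ)..2 * π, exp (↑(R * Real.sin θ) * I) = ↑(2 * π * besselJ 0 R) := by
  have hcont : Continuous fun θ : ℝ => exp (↑(R * Real.sin θ) * I) := by fun_prop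
  have hshift : ∫ θ in π..2 * π, exp (↑(R * Real.sin θ) * I)
      = ∫ θ in (0:ℝ)..π, exp (-↑(R * Real.sin θ) * I) := by
    have := integral_comp_add_right (fun θ => exp (↑(R * Real.sin θ) * I)) (a := 0) (b := π) π
    rw [zero_add, ← two_mul] at this
    rw [← this]
    simp only [Real.sin_add_pi, mul_neg, ofReal_neg]
  rw [← integral_add_adjacent_intervals (hcont.intervalIntegrable _ _)
    (hcont.intervalIntegrable _ _), hshift, ← integral_add (hcont.intervalIntegrable _ _)
    ((by fun_prop : Continuous fun θ : ℝ => exp (-↑(R * Real.sin θ) * I)).intervalIntegrable _ _)]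
  simp_rw [← two_cos, ← ofReal_cos]
  rw [integral_const_mul, intervalIntegral.integral_ofReal, besselJ]
  have : (π : ℂ) ≠ 0 := ofReal_ne_zero.2 pi_ne_zero
  simp only [CharP.cast_eq_zero, zero_mul, zero_sub, Real.cos_neg]
  push_cast
  field_simp

lemma exists_cos_mul_add_sin_mul_eq (v : EuclideanSpace ℝ (Fin 2)) :
    ∃ ψ : ℝ, ∀ θ : ℝ, Real.cos θ * v 0 + Real.sin θ * v 1 = ‖v‖ * Real.sin (θ + ψ) := by
  set z : ℂ := ⟨v 1, v 0⟩
  have hz : ‖z‖ = ‖v‖ := by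
    rw [Complex.norm_eq_sqrt_sq_add_sq, EuclideanSpace.norm_eq, Fin.sum_univ_two,
      Real.norm_eq_abs, Real.norm_eq_abs, sq_abs, sq_abs, add_comm]
  refine ⟨Complex.arg z, fun θ => ?_⟩
  have hre := Complex.norm_mul_cos_arg z
  have him := Complex.norm_mul_sin_arg z
  rw [hz] at hre him
  rw [Real.sin_add]
  linear_combination (-Real.sin θ) * hre - Real.cos θ * him

open Complex in
theorem tendsto_planeWave_average (ω : ℝ) (v : EuclideanSpace ℝ (Fin 2)) :
    Tendsto (fun N : ℕ => (1 / N : ℂ) * ∑ p ∈ Icc 1 N,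
        exp (I * ω * (Real.cos (2 * π * p / N) * v 0 + Real.sin (2 * π * p / N) * v 1)))
      atTop (𝓝 (besselJ 0 (ω * ‖v‖))) := by
  obtain ⟨ψ, hψ⟩ := exists_cos_mul_add_sin_mul_eq v
  set F : ℝ → ℂ := fun θ => exp (↑(ω * ‖v‖ * Real.sin θ) * I)
  have hF : ∀ θ : ℝ, exp (I * ω * (Real.cos θ * v 0 + Real.sin θ * v 1)) = F (θ + ψ) := by
    intro θ
    rw [show I * ω * (Real.cos θ * v 0 + Real.sin θ * v 1)
      = ↑(ω * (Real.cos θ * v 0 + Real.sin θ * v 1)) * I by push_cast; ring, hψ, ← mul_assoc]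
  have hFcont : Continuous F := by fun_prop
  have hperiodic : Function.Periodic F (2 * π) := fun θ => by
    simp only [F, Real.sin_add_two_pi]
  have hmean : (2 * π)⁻¹ • ∫ θ in (0:ℝ)..2 * π, F (θ + ψ) = besselJ 0 (ω * ‖v‖) := by
    rw [integral_comp_add_right, zero_add, add_comm, hperiodic.intervalIntegral_add_eq ψ 0,
      zero_add, integral_exp_sin_mul_I, real_smul]
    push_cast
    field_simp
  have hlim := (tendsto_riemannSum_integral two_pi_pos.le
    (hFcont.comp (continuous_add_const ψ)).continuousOn).const_smul (2 * π)⁻¹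
  simp only [hF]
  rw [← hmean]
  refine hlim.congr fun N => ?_
  have hscale : (2 * π)⁻¹ * ((2 * π - 0) / N) = 1 / N := by rw [sub_zero]; field_simp
  rw [smul_smul, hscale, real_smul]
  push_cast
  congr 1
  refine sum_congr rfl fun p _ => ?_
  simp only [Function.comp_apply]
  ring_nf

theorem imagingFunction_single_frequency_structure_general
    (ω : ℝ) (M : ℕ)
    (rm : Fin M → EuclideanSpace ℝ (Fin 2)) (r : EuclideanSpace ℝ (Fin 2)) :
    Filter.Tendsto
      (fun N : ℕ =>
        ‖(∑ m : Fin M,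
          ((1 / N : ℂ) * ∑ p ∈ Finset.Icc 1 N,
            Complex.exp (Complex.I * ω *
              (Real.cos (2 * Real.pi * p / N) * (rm m - r) 0 +
                Real.sin (2 * Real.pi * p / N) * (rm m - r) 1))) ^ 2)‖)
      Filter.atTop (nhds (∑ m : Fin M, besselJ 0 (ω * ‖rm m - r‖) ^ 2)) := by
  have hlim := (tendsto_finsetSum univ fun m _ =>
    (tendsto_planeWave_average ω (rm m - r)).pow 2).norm
  have hval : ‖∑ m : Fin M, (besselJ 0 (ω * ‖rm m - r‖) : ℂ) ^ 2‖
      = ∑ m : Fin M, besselJ 0 (ω * ‖rm m - r‖) ^ 2 := by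
    norm_cast
    exact Real.norm_of_nonneg (sum_nonneg fun m _ => sq_nonneg _)
  rwa [hval] at hlim

/-- Structure of the single-frequency subspace migration imaging function:
as the number `N` of equally spaced incident/observation directions tends to
infinity, the modulus of the sum over the inclusions of the squared Riemann
sums of the plane waves converges to `∑ₘ J₀(ω ‖rₘ - r‖)²`. -/
theorem imagingFunction_single_frequency_structure
    (ω : ℝ) (hω : 0 < ω) (M : ℕ) (hM : 0 < M)
    (rm : Fin M → EuclideanSpace ℝ (Fin 2)) (r : EuclideanSpace ℝ (Fin 2)) :
    Filter.Tendsto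
      (fun N : ℕ =>
        ‖(∑ m : Fin M,
          ((1 / N : ℂ) * ∑ p ∈ Finset.Icc 1 N,
            Complex.exp (Complex.I * ω *
              (Real.cos (2 * Real.pi * p / N) * (rm m - r) 0 +
                Real.sin (2 * Real.pi * p / N) * (rm m - r) 1))) ^ 2)‖)
      Filter.atTop (nhds (∑ m : Fin M, besselJ 0 (ω * ‖rm m - r‖) ^ 2)) :=
  imagingFunction_single_frequency_structure_general ω M rm r
end

section
/- Let N and M be positive integers, let k ∈ ℝ, let d₁, …, d_N ∈ ℝ² be vectors, let r₁, …, r_M ∈ ℝ² be points, and let τ₁, …, τ_M and κ₁, …, κ_M be complex numbers. Define the N × N complex matrix 𝕄 by 𝕄_{pq} = Σ_{m=1}^{M} (τ_m + κ_m (d_p · d_q)) exp(i k (d_p + d_q) · r_m). For each m define the N × 3 complex matrix D_m whose p-th row is (1, (d_p)₁, (d_p)₂) · exp(i k d_p · r_m), and let Λ_m be the 3 × 3 diagonal matrix diag(τ_m, κ_m, κ_m). Then 𝕄 = Σ_{m=1}^{M} D_m Λ_m D_mᵀ, where D_mᵀ is the (non-conjugated) transpose. -/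
/-!
Each summand of `𝕄` factors through the plane waves `exp(i k d_p · r_m)`: the exponential of the
sum `(d_p + d_q) · r_m` splits into the product of the two plane waves, and the contrast
`τ_m + κ_m (d_p · d_q)` is the bilinear form `diag(τ_m, κ_m, κ_m)` evaluated on the vectors
`(1, d_p)` and `(1, d_q)`. Entrywise, `D_m Λ_m D_mᵀ` is exactly this product.
-/

open Matrix

theorem Matrix.mul_diagonal_mul_transpose_apply {l n R : Type*} [Fintype l] [DecidableEq l]
    [CommSemiring R] (A : Matrix n l R) (w : l → R) (p q : n) :
    (A * diagonal w * Aᵀ) p q = ∑ j, w j * A p j * A q j := by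
  simp only [mul_apply (M := A * diagonal w), mul_diagonal, transpose_apply]
  exact Finset.sum_congr rfl fun j _ => by ring

theorem EuclideanSpace.inner_fin_two (x y : EuclideanSpace ℝ (Fin 2)) :
    inner ℝ x y = x 0 * y 0 + x 1 * y 1 := by
  simp [EuclideanSpace.inner_eq_star_dotProduct, dotProduct, Fin.sum_univ_two, mul_comm]

theorem msr_matrix_decomposition_general
    (N M : ℕ) (k : ℝ)
    (d : Fin N → EuclideanSpace ℝ (Fin 2))
    (r : Fin M → EuclideanSpace ℝ (Fin 2))
    (τ κ : Fin M → ℂ)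
    (𝕄 : Matrix (Fin N) (Fin N) ℂ)
    (h𝕄 : ∀ p q, 𝕄 p q =
      ∑ m : Fin M,
        (τ m + κ m * ((inner ℝ (d p) (d q) : ℝ) : ℂ)) *
          Complex.exp (Complex.I * k * ((inner ℝ (d p + d q) (r m) : ℝ) : ℂ)))
    (D : Fin M → Matrix (Fin N) (Fin 3) ℂ)
    (hD : ∀ m p j, D m p j =
      ![1, ((d p 0 : ℝ) : ℂ), ((d p 1 : ℝ) : ℂ)] j *
        Complex.exp (Complex.I * k * ((inner ℝ (d p) (r m) : ℝ) : ℂ))) :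
    𝕄 = ∑ m : Fin M, D m * Matrix.diagonal ![τ m, κ m, κ m] * Matrix.transpose (D m) := by
  ext p q
  rw [h𝕄, Matrix.sum_apply]
  refine Finset.sum_congr rfl fun m _ => ?_
  have plane_wave_add : Complex.exp (Complex.I * k * ((inner ℝ (d p + d q) (r m) : ℝ) : ℂ)) =
      Complex.exp (Complex.I * k * ((inner ℝ (d p) (r m) : ℝ) : ℂ)) *
        Complex.exp (Complex.I * k * ((inner ℝ (d q) (r m) : ℝ) : ℂ)) := by
    rw [inner_add_left, Complex.ofReal_add, mul_add, Complex.exp_add]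
  rw [mul_diagonal_mul_transpose_apply, Fin.sum_univ_three, plane_wave_add,
    EuclideanSpace.inner_fin_two]
  simp only [hD, cons_val_zero, cons_val_one, cons_val_two, tail_cons, head_cons,
    Complex.ofReal_add, Complex.ofReal_mul]
  ring

/-- Exact decomposition of the multi-static response (MSR) matrix:
`𝕄 = ∑ₘ Dₘ Λₘ Dₘᵀ` where `Λₘ = diag(τₘ, κₘ, κₘ)`. -/
theorem msr_matrix_decomposition
    (N M : ℕ) (hN : 0 < N) (hM : 0 < M) (k : ℝ)
    (d : Fin N → EuclideanSpace ℝ (Fin 2))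
    (r : Fin M → EuclideanSpace ℝ (Fin 2))
    (τ κ : Fin M → ℂ)
    (𝕄 : Matrix (Fin N) (Fin N) ℂ)
    (h𝕄 : ∀ p q, 𝕄 p q =
      ∑ m : Fin M,
        (τ m + κ m * ((inner ℝ (d p) (d q) : ℝ) : ℂ)) *
          Complex.exp (Complex.I * k * ((inner ℝ (d p + d q) (r m) : ℝ) : ℂ)))
    (D : Fin M → Matrix (Fin N) (Fin 3) ℂ)
    (hD : ∀ m p j, D m p j =
      ![1, ((d p 0 : ℝ) : ℂ), ((d p 1 : ℝ) : ℂ)] j *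
        Complex.exp (Complex.I * k * ((inner ℝ (d p) (r m) : ℝ) : ℂ))) :
    𝕄 = ∑ m : Fin M, D m * Matrix.diagonal ![τ m, κ m, κ m] * Matrix.transpose (D m) :=
  msr_matrix_decomposition_general N M k d r τ κ 𝕄 h𝕄 D hD
end

section
/- For every real number x, |J₁(x)| ≤ 1/√2. -/
open Real intervalIntegral

lemma integral_cos_mul_comp_sin_eq_zero (f : ℝ → ℝ) :
    ∫ θ in (0:ℝ)..π, cos θ * f (sin θ) = 0 := by
  have hreflect : (∫ θ in (0:ℝ)..π, cos (π - θ) * f (sin (π - θ))) =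
      ∫ θ in (0:ℝ)..π, cos θ * f (sin θ) := by
    simpa using integral_comp_sub_left (fun θ => cos θ * f (sin θ)) π (a := 0) (b := π)
  simp only [cos_pi_sub, sin_pi_sub, neg_mul, integral_neg] at hreflect
  linarith

lemma besselJ_one_eq (x : ℝ) :
    besselJ 1 x = π⁻¹ * ∫ θ in (0:ℝ)..π, sin θ * sin (x * sin θ) := by
  have hcos : Continuous fun θ => cos θ * cos (x * sin θ) := by fun_prop
  have hsin : Continuous fun θ => sin θ * sin (x * sin θ) := by fun_prop
  calc besselJ 1 x
      = π⁻¹ * ∫ θ in (0:ℝ)..π, (cos θ * cos (x * sin θ) + sin θ * sin (x * sin θ)) := by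
        simp only [besselJ, Nat.cast_one, one_mul, one_div, cos_sub]
    _ = π⁻¹ * ∫ θ in (0:ℝ)..π, sin θ * sin (x * sin θ) := by
        rw [integral_add (hcos.intervalIntegrable _ _) (hsin.intervalIntegrable _ _),
          integral_cos_mul_comp_sin_eq_zero (fun s => cos (x * s)), zero_add]

lemma abs_integral_sin_mul_sin_le_two (x : ℝ) :
    |∫ θ in (0:ℝ)..π, sin θ * sin (x * sin θ)| ≤ 2 := by
  have hbound : ∀ θ ∈ Set.Ioc 0 π, ‖sin θ * sin (x * sin θ)‖ ≤ sin θ := fun θ hθ => by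
    rw [Real.norm_eq_abs, abs_mul, abs_of_nonneg (sin_nonneg_of_nonneg_of_le_pi hθ.1.le hθ.2)]
    exact mul_le_of_le_one_right (sin_nonneg_of_nonneg_of_le_pi hθ.1.le hθ.2) (abs_sin_le_one _)
  calc |∫ θ in (0:ℝ)..π, sin θ * sin (x * sin θ)|
      ≤ ∫ θ in (0:ℝ)..π, sin θ :=
        norm_integral_le_of_norm_le pi_pos.le (.of_forall hbound)
          (continuous_sin.intervalIntegrable _ _)
    _ = 2 := by norm_num [integral_sin]

lemma abs_besselJ_one_le_two_div_pi (x : ℝ) : |besselJ 1 x| ≤ 2 / π := by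
  rw [besselJ_one_eq, abs_mul, abs_inv, abs_of_pos pi_pos, div_eq_inv_mul]
  exact mul_le_mul_of_nonneg_left (abs_integral_sin_mul_sin_le_two x) (by positivity)

lemma two_div_pi_lt_inv_sqrt_two : 2 / π < 1 / √2 := by
  have hsqrt : √2 < 3 / 2 := (sqrt_lt' (by norm_num)).mpr (by norm_num)
  rw [div_lt_div_iff₀ pi_pos (by positivity)]
  linarith [pi_gt_three]

/-- Boundedness property `|J₁(x)| ≤ 1/√2` for all real `x`. -/
theorem abs_besselJ1_le_inv_sqrt_two (x : ℝ) :
    |besselJ 1 x| ≤ 1 / Real.sqrt 2 :=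
  (abs_besselJ_one_le_two_div_pi x).trans two_div_pi_lt_inv_sqrt_two.le
end
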